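/- Let κ be a regular cardinal with κ^{<κ} = κ. If GMP_{κ⁺⁺}(κ⁺³) holds, then the tree property TP(κ⁺⁺) holds, i.e., every κ⁺⁺-tree has a cofinal branch. -/

import Mathlib

/-!
Formalization over the ZFC universe `ZFSet`.  We view `H(θ)` as the collection
of ZF-sets whose transitive closure has cardinality `< θ`, and `M ≺ H(θ)` as
elementarity for the first-order language with a single binary relation
(interpreted as membership).  Cardinals and ordinals of the set-theoretic
universe are rendered as `Cardinal.{1}` and `Ordinal.{1}`, matching the
cardinalities and order types of (collections of) elements of `ZFSet : Type 1`.
-/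

open FirstOrder Cardinal

/-- A collection of ZF-sets viewed as a structure in the first-order language
with one binary relation (`FirstOrder.Language.graph`), interpreting the
relation symbol as membership. -/
def memStructure (A : Set ZFSet.{0}) : Language.graph.Structure A where
  funMap := fun f _ => f.elim
  RelMap := fun {n} r => match n, r with
    | 2, .adj => fun x => ((x 0 : ZFSet) ∈ (x 1 : ZFSet))

/-- `φ` is realized by the assignment `v` in the membership structure on `A`. -/
def realizeIn (A : Set ZFSet.{0}) {n : ℕ} (φ : Language.graph.Formula (Fin n))
    (v : Fin n → A) : Prop :=
  letI := memStructure A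
  φ.Realize v

/-- `M ≺ N`: `M` is an elementary submodel of `N` with respect to the
membership relation. -/
def IsElemSubmodel (M N : Set ZFSet.{0}) : Prop :=
  ∃ h : M ⊆ N, ∀ (n : ℕ) (φ : Language.graph.Formula (Fin n)) (v : Fin n → M),
    realizeIn N φ (fun i => Set.inclusion h (v i)) ↔ realizeIn M φ v

/-- `H(θ)`: the collection of ZF-sets whose transitive closure has cardinality
less than `θ`. -/
def HSet (θ : Cardinal.{1}) : Set ZFSet.{0} :=
  { x | #{ y : ZFSet.{0} | Relation.TransGen (· ∈ ·) y x } < θ }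

/-- `d` is `(κ⁺, M)`-approximated: `d ∩ z ∈ M` for every `z ∈ M` with
`z ⊆ M` and `|z| ≤ κ`. -/
def IsApproximated (κ : Cardinal.{1}) (M : Set ZFSet.{0}) (d : ZFSet.{0}) : Prop :=
  ∀ z : ZFSet.{0}, z ∈ M → z.toSet ⊆ M → #↥z.toSet ≤ κ → d ∩ z ∈ M

/-- `d` is `M`-guessed: there is `e ∈ M` with `e ∩ M = d ∩ M`. -/
def IsGuessed (M : Set ZFSet.{0}) (d : ZFSet.{0}) : Prop :=
  ∃ e ∈ M, e.toSet ∩ M = d.toSet ∩ M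

/-- `M` is a `κ⁺`-guessing model (as a submodel of `H(θ)`): an elementary
submodel of `H(θ)` of cardinality `κ⁺`, closed under sequences of length `< κ`,
in which every `(κ⁺, M)`-approximated subset of an element of `M` is
`M`-guessed. -/
structure IsGuessingModel (κ θ : Cardinal.{1}) (M : Set ZFSet.{0}) : Prop where
  elem : IsElemSubmodel M (HSet θ)
  card : #↥M = Order.succ κ
  closed : ∀ z : ZFSet.{0}, z.toSet ⊆ M → #↥z.toSet < κ → z ∈ M
  guess : ∀ x ∈ M, ∀ d : ZFSet.{0}, d ⊆ x → IsApproximated κ M d → IsGuessed M d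

/-- `P_μ(X)`: subsets of `X` of cardinality less than `μ`. -/
def smallSubsets (μ : Cardinal.{1}) (X : Set ZFSet.{0}) : Set (Set ZFSet.{0}) :=
  { Y | Y ⊆ X ∧ #↥Y < μ }

/-- `C` is club in `P_μ(X)`: `⊆`-cofinal and closed under unions of
`⊆`-increasing chains of length less than `μ`. -/
def IsClubIn (μ : Cardinal.{1}) (X : Set ZFSet.{0}) (C : Set (Set ZFSet.{0})) : Prop :=
  C ⊆ smallSubsets μ X ∧
  (∀ a ∈ smallSubsets μ X, ∃ c ∈ C, a ⊆ c) ∧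
  ∀ δ : Ordinal.{1}, 0 < δ → δ.card < μ →
    ∀ f : Ordinal.{1} → Set ZFSet.{0},
      (∀ i < δ, f i ∈ C) → (∀ i j, i ≤ j → j < δ → f i ⊆ f j) →
      (⋃ i ∈ Set.Iio δ, f i) ∈ C

/-- `S` is stationary in `P_μ(X)`: `S` meets every club subset of `P_μ(X)`. -/
def IsStationaryIn (μ : Cardinal.{1}) (X : Set ZFSet.{0}) (S : Set (Set ZFSet.{0})) : Prop :=
  S ⊆ smallSubsets μ X ∧ ∀ C, IsClubIn μ X C → (S ∩ C).Nonempty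

/-- The guessing model principle `GMP_{κ⁺⁺}(θ)`: the set of
`M ∈ P_{κ⁺⁺}(H(θ))` that are `κ⁺`-guessing models is stationary in
`P_{κ⁺⁺}(H(θ))`. -/
def GMP (κ θ : Cardinal.{1}) : Prop :=
  IsStationaryIn (Order.succ (Order.succ κ)) (HSet θ)
    { M | M ∈ smallSubsets (Order.succ (Order.succ κ)) (HSet θ) ∧ IsGuessingModel κ θ M }

/-- A von Neumann ordinal: a transitive ZF-set linearly ordered by
membership. -/
def IsVonNeumannOrdinal (x : ZFSet.{0}) : Prop :=
  (∀ y ∈ x, y ⊆ x) ∧ ∀ y ∈ x, ∀ z ∈ x, y ∈ z ∨ y = z ∨ z ∈ y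

/-- The ordinal coded by a (von Neumann ordinal) ZF-set: the order type of
membership on it. -/
noncomputable def ordOf (x : ZFSet.{0}) : Ordinal.{1} :=
  letI := Classical.dec (IsWellOrder ↥x.toSet fun a b => (a : ZFSet) ∈ (b : ZFSet))
  if h : IsWellOrder ↥x.toSet (fun a b => (a : ZFSet) ∈ (b : ZFSet)) then
    @Ordinal.type ↥x.toSet (fun a b => (a : ZFSet) ∈ (b : ZFSet)) h
  else 0

/-- A tree coded in the ZF universe: a set of nodes together with a set of
(Kuratowski) pairs coding a strict partial order in which the set of
predecessors of every node is well-ordered. -/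
structure ZFTree where
  nodes : ZFSet.{0}
  rel : ZFSet.{0}
  rel_sub : ∀ p ∈ rel, ∃ a ∈ nodes, ∃ b ∈ nodes, p = ZFSet.pair a b
  lt_irrefl : ∀ a, ZFSet.pair a a ∉ rel
  lt_trans : ∀ a b c, ZFSet.pair a b ∈ rel → ZFSet.pair b c ∈ rel → ZFSet.pair a c ∈ rel
  pred_wellOrder : ∀ t ∈ nodes,
    IsWellOrder {s : ZFSet.{0} // ZFSet.pair s t ∈ rel} fun a b => ZFSet.pair a.1 b.1 ∈ rel

namespace ZFTree

/-- The strict order relation of the tree. -/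
def Lt (T : ZFTree) (a b : ZFSet.{0}) : Prop := ZFSet.pair a b ∈ T.rel

/-- The height of a node: the order type of its set of predecessors. -/
noncomputable def nodeHeight (T : ZFTree) (t : ZFSet.{0}) : Ordinal.{1} :=
  letI := Classical.dec (IsWellOrder {s : ZFSet.{0} // T.Lt s t} fun a b => T.Lt a.1 b.1)
  if h : IsWellOrder {s : ZFSet.{0} // T.Lt s t} fun a b => T.Lt a.1 b.1 then
    @Ordinal.type {s : ZFSet.{0} // T.Lt s t} (fun a b => T.Lt a.1 b.1) h
  else 0

/-- The `α`-th level of the tree: nodes of height `α`. -/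
def level (T : ZFTree) (α : Ordinal.{1}) : Set ZFSet.{0} :=
  { t ∈ T.nodes.toSet | T.nodeHeight t = α }

/-- The height of the tree: the least ordinal whose level is empty. -/
noncomputable def height (T : ZFTree) : Ordinal.{1} :=
  sInf { α | T.level α = ∅ }

/-- A cofinal branch: a chain containing nodes of every height below the
height of the tree. -/
def IsCofinalBranch (T : ZFTree) (B : Set ZFSet.{0}) : Prop :=
  B ⊆ T.nodes.toSet ∧
  (∀ a ∈ B, ∀ b ∈ B, a ≠ b → T.Lt a b ∨ T.Lt b a) ∧
  ∀ α < T.height, ∃ b ∈ B, T.nodeHeight b = α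

/-- A `λ`-tree: a tree of height `λ` all of whose levels have cardinality
less than `λ`. -/
def IsLambdaTree (lam : Cardinal.{1}) (T : ZFTree) : Prop :=
  T.height = lam.ord ∧ ∀ α : Ordinal.{1}, #↥(T.level α) < lam

end ZFTree

/-!
Let `λ = κ⁺⁺` and let `T` be a `λ`-tree, its nodes coded by the elements of a transitive set of
size `≤ λ`, which lies in `H(λ⁺)`. Take a `κ⁺`-guessing model `M` closed under the functions in
`ZFTree.hull`. The heights of the nodes coded in `M` lie below some `δ < λ`; fix a node `t` of
height `δ` and let `d` be the set of codes of its predecessors. For `z ∈ M` of size `≤ κ`, the codes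
in `z` are of nodes below some height `β < λ`, so `d ∩ z` is also the trace on `z` of the
predecessor of `t` at height `β`: there are fewer than `λ` such traces, and `M` contains all of
them. Hence `d` is approximated; let `e ∈ M` guess it. If the nodes coded in `e` failed to form a
chain, or missed a level, the least height witnessing this would be computable from `e`, so the
nodes at and below it would be coded in `M`. But on `M` the set `e` agrees with `d`, which codes a
chain meeting every level below `δ`.
-/

universe u

open Set

theorem ZFSet.exists_isTransitive_mk_toSet_eq (x : ZFSet.{u}) :
    ∃ X : ZFSet.{u}, X.IsTransitive ∧ #X.toSet = #x.toSet := by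
  refine ⟨x.card.ord.toZFSet, (ZFSet.isOrdinal_toZFSet _).isTransitive, ?_⟩
  have h := congrArg Cardinal.lift.{u + 1} (Ordinal.card_toZFSet x.card.ord)
  rwa [Cardinal.card_ord, ZFSet.card, ZFSet.card, Cardinal.lift_mk_shrink'',
    Cardinal.lift_mk_shrink''] at h

theorem Ordinal.mk_biUnion_Iio_lt_of_isRegular {α : Type u} {c : Cardinal.{u}} (hc : c.IsRegular)
    {o : Ordinal.{u}} (ho : o.card < c) {f : Ordinal.{u} → Set α} (hf : ∀ i < o, #(f i) < c) :
    #(⋃ i ∈ Iio o, f i) < c := by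
  rw [biUnion_eq_iUnion, ← ToType.mk.symm.surjective.iUnion_comp fun i : Iio o => f i,
    Cardinal.card_iUnion_lt_iff_forall_of_isRegular hc (by rwa [Cardinal.mk_toType])]
  exact fun j => hf _ (ToType.mk.symm j).2

theorem Ordinal.sInf_lt_of_subset_Iio {S : Set Ordinal} {o : Ordinal} (hS : S ⊆ Iio o)
    (ho : 0 < o) : sInf S < o := by
  rcases S.eq_empty_or_nonempty with rfl | hne
  · rwa [Ordinal.sInf_empty]
  · exact hS (csInf_mem hne)

theorem mem_HSet_of_subset {θ : Cardinal.{1}} {x y : ZFSet.{0}} (hx : x ∈ HSet θ) (h : y ⊆ x) :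
    y ∈ HSet θ := by
  refine lt_of_le_of_lt (Cardinal.mk_le_mk_of_subset fun z hz => ?_) hx
  obtain ⟨b, hzb, hby⟩ := Relation.TransGen.tail'_iff.1 hz
  exact Relation.TransGen.tail' hzb (h hby)

theorem mem_HSet_of_mem {θ : Cardinal.{1}} {x y : ZFSet.{0}} (hx : x ∈ HSet θ) (h : y ∈ x) :
    y ∈ HSet θ := by
  refine lt_of_le_of_lt (Cardinal.mk_le_mk_of_subset fun z hz => ?_) hx
  exact Relation.TransGen.tail hz h

theorem mem_HSet_of_isTransitive {θ : Cardinal.{1}} {x : ZFSet.{0}} (hx : x.IsTransitive)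
    (h : #x.toSet < θ) : x ∈ HSet θ := by
  refine lt_of_le_of_lt (Cardinal.mk_le_mk_of_subset fun z hz => ?_) h
  induction hz using Relation.TransGen.head_induction_on with
  | single hzx => exact hzx
  | head hzy _ ih => exact hx.mem_trans hzy ih

section ClosurePoints

variable {μ : Cardinal.{1}} {X : Set ZFSet.{0}} {x₀ : ZFSet.{0}} {g : ZFSet.{0} → Set ZFSet.{0}}

def closurePoints (μ : Cardinal.{1}) (X : Set ZFSet.{0}) (x₀ : ZFSet.{0})
    (g : ZFSet.{0} → Set ZFSet.{0}) : Set (Set ZFSet.{0}) :=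
  {Y | Y ∈ smallSubsets μ X ∧ x₀ ∈ Y ∧ ∀ w ∈ Y, g w ⊆ Y}

theorem union_biUnion_mem_smallSubsets (hμ : μ.IsRegular) (hgX : ∀ w ∈ X, g w ⊆ X)
    (hg : ∀ w, #(g w) < μ) {Y : Set ZFSet.{0}} (hY : Y ∈ smallSubsets μ X) :
    Y ∪ ⋃ w ∈ Y, g w ∈ smallSubsets μ X :=
  ⟨union_subset hY.1 (iUnion₂_subset fun w hw => hgX w (hY.1 hw)),
    (Cardinal.mk_union_le _ _).trans_lt <| Cardinal.add_lt_of_lt hμ.aleph0_le hY.2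
      ((Cardinal.card_biUnion_lt_iff_forall_of_isRegular hμ hY.2).2 fun w _ => hg w)⟩

theorem exists_mem_closurePoints_superset (hμ : μ.IsRegular) (hμ₀ : ℵ₀ < μ) (hx₀ : x₀ ∈ X)
    (hgX : ∀ w ∈ X, g w ⊆ X) (hg : ∀ w, #(g w) < μ) {a : Set ZFSet.{0}}
    (ha : a ∈ smallSubsets μ X) : ∃ Y ∈ closurePoints μ X x₀ g, a ⊆ Y := by
  set Y : ℕ → Set ZFSet.{0} := fun n => (fun Z => Z ∪ ⋃ w ∈ Z, g w)^[n] (insert x₀ a)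
  have hY_succ (n : ℕ) : Y (n + 1) = Y n ∪ ⋃ w ∈ Y n, g w :=
    Function.iterate_succ_apply' _ _ _
  have hY (n : ℕ) : Y n ∈ smallSubsets μ X := by
    induction n with
    | zero => exact ⟨insert_subset hx₀ ha.1, Cardinal.mk_insert_le.trans_lt
        (Cardinal.add_lt_of_lt hμ.aleph0_le ha.2 (Cardinal.one_lt_aleph0.trans hμ₀))⟩
    | succ n ih => exact hY_succ n ▸ union_biUnion_mem_smallSubsets hμ hgX hg ih
  refine ⟨⋃ n : ULift.{1} ℕ, Y n.down, ⟨⟨iUnion_subset fun n => (hY n.down).1, ?_⟩, ?_, ?_⟩, ?_⟩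
  · exact (Cardinal.card_iUnion_lt_iff_forall_of_isRegular hμ (by simpa using hμ₀)).2
      fun n => (hY n.down).2
  · exact mem_iUnion.2 ⟨⟨0⟩, mem_insert _ _⟩
  · intro w hw
    obtain ⟨n, hn⟩ := mem_iUnion.1 hw
    refine subset_iUnion_of_subset ⟨n.down + 1⟩ ?_
    rw [hY_succ]
    exact subset_union_of_subset_right (subset_biUnion_of_mem hn) _
  · exact subset_iUnion_of_subset ⟨0⟩ (subset_insert _ _)

theorem biUnion_Iio_mem_closurePoints (hμ : μ.IsRegular) {δ : Ordinal.{1}} (hδ₀ : 0 < δ)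
    (hδ : δ.card < μ) {f : Ordinal.{1} → Set ZFSet.{0}}
    (hf : ∀ i < δ, f i ∈ closurePoints μ X x₀ g) :
    ⋃ i ∈ Iio δ, f i ∈ closurePoints μ X x₀ g := by
  refine ⟨⟨iUnion₂_subset fun i hi => (hf i hi).1.1,
    Ordinal.mk_biUnion_Iio_lt_of_isRegular hμ hδ fun i hi => (hf i hi).1.2⟩,
    mem_biUnion hδ₀ (hf 0 hδ₀).2.1, fun w hw => ?_⟩
  obtain ⟨i, hi, hwi⟩ := mem_iUnion₂.1 hw
  exact ((hf i hi).2.2 w hwi).trans (subset_biUnion_of_mem (u := f) hi)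

theorem isClubIn_closurePoints (hμ : μ.IsRegular) (hμ₀ : ℵ₀ < μ) (hx₀ : x₀ ∈ X)
    (hgX : ∀ w ∈ X, g w ⊆ X) (hg : ∀ w, #(g w) < μ) : IsClubIn μ X (closurePoints μ X x₀ g) :=
  ⟨fun _ hY => hY.1, fun _ ha => exists_mem_closurePoints_superset hμ hμ₀ hx₀ hgX hg ha,
    fun _ hδ₀ hδ _ hf _ => biUnion_Iio_mem_closurePoints hμ hδ₀ hδ hf⟩

end ClosurePoints

namespace ZFTree

variable {T : ZFTree} {s t : ZFSet.{0}} {α : Ordinal.{1}}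

theorem mem_nodes_of_lt (h : T.Lt s t) : s ∈ T.nodes ∧ t ∈ T.nodes := by
  obtain ⟨a, ha, b, hb, he⟩ := T.rel_sub _ h
  obtain ⟨rfl, rfl⟩ := ZFSet.pair_injective he
  exact ⟨ha, hb⟩

theorem predWellOrder (ht : t ∈ T.nodes) :
    IsWellOrder {s // T.Lt s t} fun a b => T.Lt a.1 b.1 :=
  T.pred_wellOrder t ht

theorem nodeHeight_eq_type (ht : t ∈ T.nodes) :
    T.nodeHeight t = @Ordinal.type _ (fun a b : {s // T.Lt s t} => T.Lt a.1 b.1)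
      (predWellOrder ht) := by
  rw [nodeHeight, dif_pos (predWellOrder ht)]

theorem nodeHeight_eq_typein (h : T.Lt s t) :
    T.nodeHeight s = @Ordinal.typein _ (fun a b : {s // T.Lt s t} => T.Lt a.1 b.1)
      (predWellOrder (mem_nodes_of_lt h).2) ⟨s, h⟩ := by
  let := predWellOrder (mem_nodes_of_lt h).2
  let := predWellOrder (mem_nodes_of_lt h).1
  rw [nodeHeight_eq_type (mem_nodes_of_lt h).1, ← Ordinal.type_subrel]
  refine Ordinal.type_eq.2 ⟨RelIso.ofSurjective
    (RelEmbedding.ofMonotone (fun u => ⟨⟨u.1, T.lt_trans _ _ _ u.2 h⟩, u.2⟩) fun _ _ => id) ?_⟩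
  rintro ⟨⟨u, -⟩, hus⟩
  exact ⟨⟨u, hus⟩, rfl⟩

theorem nodeHeight_lt_nodeHeight (h : T.Lt s t) : T.nodeHeight s < T.nodeHeight t := by
  let := predWellOrder (mem_nodes_of_lt h).2
  rw [nodeHeight_eq_typein h, nodeHeight_eq_type (mem_nodes_of_lt h).2]
  exact Ordinal.typein_lt_type _ _

theorem exists_lt_nodeHeight_eq (ht : t ∈ T.nodes) (hα : α < T.nodeHeight t) :
    ∃ s, T.Lt s t ∧ T.nodeHeight s = α := by
  let := predWellOrder ht
  rw [nodeHeight_eq_type ht] at hα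
  obtain ⟨⟨s, hst⟩, he⟩ := Ordinal.typein_surj _ hα
  exact ⟨s, hst, (nodeHeight_eq_typein hst).trans he⟩

theorem trichotomous_of_lt {s₁ s₂ : ZFSet.{0}} (h₁ : T.Lt s₁ t) (h₂ : T.Lt s₂ t) :
    T.Lt s₁ s₂ ∨ s₁ = s₂ ∨ T.Lt s₂ s₁ := by
  let := predWellOrder (mem_nodes_of_lt h₁).2
  rcases trichotomous_of (fun a b : {s // T.Lt s t} => T.Lt a.1 b.1) ⟨s₁, h₁⟩ ⟨s₂, h₂⟩ with
    h | h | h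
  · exact Or.inl h
  · exact Or.inr (Or.inl (congrArg Subtype.val h))
  · exact Or.inr (Or.inr h)

theorem level_nonempty (h : α < T.height) : (T.level α).Nonempty :=
  nonempty_iff_ne_empty.2 fun he => (csInf_le' (s := {β | T.level β = ∅}) he).not_gt h

theorem nodeHeight_lt_height (h₀ : T.height ≠ 0) (ht : t ∈ T.nodes) :
    T.nodeHeight t < T.height := by
  have hS : {β | T.level β = ∅}.Nonempty := by
    by_contra hS
    exact h₀ (by rw [height, not_nonempty_iff_eq_empty.1 hS, Ordinal.sInf_empty])
  have hempty := eq_empty_iff_forall_notMem.1 (csInf_mem hS : T.level T.height = ∅)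
  by_contra hle
  rcases (not_lt.1 hle).eq_or_lt with heq | hlt
  · exact hempty t ⟨ht, heq.symm⟩
  · obtain ⟨s, hst, hs⟩ := exists_lt_nodeHeight_eq ht hlt
    exact hempty s ⟨(mem_nodes_of_lt hst).1, hs⟩

theorem mk_nodeHeight_lt_lt {c : Cardinal.{1}} (hc : c.IsRegular) (hl : ∀ α, #(T.level α) < c)
    {β : Ordinal.{1}} (hβ : β.card < c) : #{s : T.nodes.toSet | T.nodeHeight s < β} < c := by
  refine lt_of_le_of_lt ?_ (Ordinal.mk_biUnion_Iio_lt_of_isRegular hc hβ fun α _ => hl α)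
  refine Cardinal.mk_le_of_injective (f := fun s => ⟨s.1.1, mem_biUnion s.2 ⟨s.1.2, rfl⟩⟩) ?_
  intro a b h
  simpa [Subtype.ext_iff] using h

section Coding

variable (T)

/-- The nodes of `T` are arbitrary sets, possibly far outside `H(θ)`, so they are replaced by
codes: the elements of a transitive set of the same size. -/
noncomputable def codeSet : ZFSet.{0} :=
  T.nodes.exists_isTransitive_mk_toSet_eq.choose

theorem isTransitive_codeSet : T.codeSet.IsTransitive :=
  T.nodes.exists_isTransitive_mk_toSet_eq.choose_spec.1

theorem mk_codeSet : #T.codeSet.toSet = #T.nodes.toSet :=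
  T.nodes.exists_isTransitive_mk_toSet_eq.choose_spec.2

noncomputable def codeEquiv : T.nodes.toSet ≃ T.codeSet.toSet :=
  (Cardinal.eq.1 T.mk_codeSet.symm).some

noncomputable def code (s : T.nodes.toSet) : ZFSet.{0} := T.codeEquiv s

theorem code_injective : Function.Injective T.code :=
  Subtype.val_injective.comp T.codeEquiv.injective

theorem code_mem_codeSet (s : T.nodes.toSet) : T.code s ∈ T.codeSet := (T.codeEquiv s).2

noncomputable def predCodes (t : ZFSet.{0}) : ZFSet.{0} :=
  ZFSet.sep (fun c => ∃ s, T.code s = c ∧ T.Lt s t) T.codeSet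

theorem predCodes_subset (t : ZFSet.{0}) : T.predCodes t ⊆ T.codeSet :=
  fun _ hc => (ZFSet.mem_sep.1 hc).1

theorem mem_predCodes {c : ZFSet.{0}} : c ∈ T.predCodes t ↔ ∃ s, T.code s = c ∧ T.Lt s t := by
  refine ZFSet.mem_sep.trans ⟨And.right, fun h => ⟨?_, h⟩⟩
  obtain ⟨s, rfl, -⟩ := h
  exact T.code_mem_codeSet s

theorem code_mem_predCodes {s : T.nodes.toSet} : T.code s ∈ T.predCodes t ↔ T.Lt s t := by
  rw [mem_predCodes]
  exact ⟨fun ⟨_, hs, h⟩ => T.code_injective hs ▸ h, fun h => ⟨s, rfl, h⟩⟩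

noncomputable def heightSup (A : Set ZFSet.{0}) : Ordinal.{1} :=
  ⨆ s : {s // T.code s ∈ A}, Order.succ (T.nodeHeight s.1)

theorem nodeHeight_lt_heightSup {A : Set ZFSet.{0}} {s : T.nodes.toSet} (h : T.code s ∈ A) :
    T.nodeHeight s < T.heightSup A :=
  (Order.lt_succ _).trans_le <| le_ciSup
    (f := fun s : {s // T.code s ∈ A} => Order.succ (T.nodeHeight s.1))
    Ordinal.bddAbove_of_small ⟨s, h⟩

def traces (z : ZFSet.{0}) : Set ZFSet.{0} :=
  range fun t : T.nodes.toSet => T.predCodes t ∩ z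

theorem predCodes_inter_eq {z : ZFSet.{0}} {s' : ZFSet.{0}} (hs' : T.Lt s' t)
    (h : T.heightSup z.toSet ≤ T.nodeHeight s') : T.predCodes t ∩ z = T.predCodes s' ∩ z := by
  ext c
  simp only [ZFSet.mem_inter, mem_predCodes]
  refine ⟨fun ⟨⟨u, hu, hut⟩, hcz⟩ => ⟨⟨u, hu, ?_⟩, hcz⟩,
    fun ⟨⟨u, hu, hus⟩, hcz⟩ => ⟨⟨u, hu, T.lt_trans _ _ _ hus hs'⟩, hcz⟩⟩
  have hlt : T.nodeHeight u < T.nodeHeight s' := (T.nodeHeight_lt_heightSup (hu ▸ hcz)).trans_le h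
  rcases trichotomous_of_lt hut hs' with h' | rfl | h'
  · exact h'
  · exact (_root_.lt_irrefl _ hlt).elim
  · exact (_root_.lt_irrefl _ ((nodeHeight_lt_nodeHeight h').trans hlt)).elim

def codesUpTo (γ : Ordinal.{1}) : Set ZFSet.{0} := T.code '' {s | T.nodeHeight s ≤ γ}

def incomparableLevels (e : ZFSet.{0}) : Set Ordinal.{1} :=
  {γ | ∃ a b : T.nodes.toSet, T.code a ∈ e ∧ T.code b ∈ e ∧ a ≠ b ∧ ¬T.Lt a b ∧ ¬T.Lt b a ∧
    max (T.nodeHeight a) (T.nodeHeight b) = γ}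

def missingLevels (e : ZFSet.{0}) : Set Ordinal.{1} :=
  {α | α < T.height ∧ ∀ s : T.nodes.toSet, T.nodeHeight s = α → T.code s ∉ e}

/-- Closure under `hull` stands in for the elementarity of a guessing model: it provides the
traces of branches on small sets, and witnesses for each way in which a set `e` can fail to code
a cofinal branch. -/
noncomputable def hull (lam : Cardinal.{1}) (w : ZFSet.{0}) : Set ZFSet.{0} :=
  (if #w.toSet < lam then T.traces w else ∅) ∪ T.codesUpTo (sInf (T.incomparableLevels w)) ∪
    T.codesUpTo (sInf (T.missingLevels w))

def branchOf (e : ZFSet.{0}) : Set ZFSet.{0} := Subtype.val '' {s : T.nodes.toSet | T.code s ∈ e}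

end Coding

section Bounds

variable {lam : Cardinal.{1}}

theorem height_ne_zero_of_isLambdaTree (hlam : lam.IsRegular) (hT : T.IsLambdaTree lam) :
    T.height ≠ 0 := by
  rw [hT.1, Ne, Cardinal.ord_eq_zero]
  exact hlam.pos.ne'

theorem mk_nodes_lt_succ (hlam : lam.IsRegular) (hT : T.IsLambdaTree lam) :
    #T.nodes.toSet < Order.succ lam := by
  have hsucc := Cardinal.isRegular_succ hlam.aleph0_le
  refine lt_of_le_of_lt ?_ (T.mk_nodeHeight_lt_lt hsucc (fun α => (hT.2 α).trans (Order.lt_succ _))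
    (β := T.height) (by rw [hT.1, Cardinal.card_ord]; exact Order.lt_succ _))
  exact Cardinal.mk_le_of_injective (f := fun s => ⟨s, nodeHeight_lt_height
    (height_ne_zero_of_isLambdaTree hlam hT) s.2⟩) fun _ _ h => congrArg Subtype.val h

theorem codeSet_mem_HSet (hlam : lam.IsRegular) (hT : T.IsLambdaTree lam) :
    T.codeSet ∈ HSet (Order.succ lam) :=
  mem_HSet_of_isTransitive T.isTransitive_codeSet (T.mk_codeSet ▸ mk_nodes_lt_succ hlam hT)

theorem heightSup_lt (hlam : lam.IsRegular) (hT : T.IsLambdaTree lam) {A : Set ZFSet.{0}}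
    (hA : #A < lam) : T.heightSup A < lam.ord := by
  refine Ordinal.iSup_lt_of_lt_cof ?_ fun s => ?_
  · rw [hlam.cof_ord]
    exact (Cardinal.mk_le_of_injective (f := fun s : {s // T.code s ∈ A} => (⟨_, s.2⟩ : A))
      fun a b h => Subtype.ext (T.code_injective (by simpa using h))).trans_lt hA
  · exact (Cardinal.isSuccLimit_ord hlam.aleph0_le).succ_lt
      (hT.1 ▸ nodeHeight_lt_height (height_ne_zero_of_isLambdaTree hlam hT) s.1.2)

theorem mk_setOf_nodeHeight_le_lt (hlam : lam.IsRegular) (hT : T.IsLambdaTree lam)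
    {γ : Ordinal.{1}} (hγ : γ < lam.ord) : #{s : T.nodes.toSet | T.nodeHeight s ≤ γ} < lam := by
  refine lt_of_le_of_lt (Cardinal.mk_le_mk_of_subset fun s hs => ?_)
    (T.mk_nodeHeight_lt_lt hlam hT.2 (β := Order.succ γ) ?_)
  · exact Order.lt_succ_iff.2 (show T.nodeHeight s.1 ≤ γ from hs)
  · exact Cardinal.lt_ord.1 ((Cardinal.isSuccLimit_ord hlam.aleph0_le).succ_lt hγ)

theorem mk_traces_lt (hlam : lam.IsRegular) (hT : T.IsLambdaTree lam) {z : ZFSet.{0}}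
    (hz : #z.toSet < lam) : #(T.traces z) < lam := by
  have hsub : T.traces z ⊆
      (fun t : T.nodes.toSet => T.predCodes t ∩ z) ''
        {t | T.nodeHeight t ≤ T.heightSup z.toSet} := by
    rintro _ ⟨t, rfl⟩
    by_cases h : T.nodeHeight t ≤ T.heightSup z.toSet
    · exact ⟨t, h, rfl⟩
    · obtain ⟨s, hst, hs⟩ := exists_lt_nodeHeight_eq t.2 (not_le.1 h)
      exact ⟨⟨s, (mem_nodes_of_lt hst).1⟩, hs.le, (T.predCodes_inter_eq hst hs.ge).symm⟩
  exact (Cardinal.mk_le_mk_of_subset hsub).trans_lt <| Cardinal.mk_image_le.trans_lt <|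
    mk_setOf_nodeHeight_le_lt hlam hT (heightSup_lt hlam hT hz)

theorem mk_hull_lt (hlam : lam.IsRegular) (hT : T.IsLambdaTree lam) (w : ZFSet.{0}) :
    #(T.hull lam w) < lam := by
  have h₀ := height_ne_zero_of_isLambdaTree hlam hT
  have hcodes (S : Set Ordinal.{1}) (hS : S ⊆ Iio T.height) : #(T.codesUpTo (sInf S)) < lam :=
    Cardinal.mk_image_le.trans_lt <| mk_setOf_nodeHeight_le_lt hlam hT <|
      hT.1 ▸ Ordinal.sInf_lt_of_subset_Iio hS h₀.bot_lt
  have htraces : #(if #w.toSet < lam then T.traces w else ∅ : Set ZFSet.{0}) < lam := by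
    split_ifs with hw
    · exact mk_traces_lt hlam hT hw
    · simpa using hlam.pos
  have hincomparable : T.incomparableLevels w ⊆ Iio T.height := by
    rintro _ ⟨a, b, -, -, -, -, -, rfl⟩
    exact max_lt (nodeHeight_lt_height h₀ a.2) (nodeHeight_lt_height h₀ b.2)
  refine (Cardinal.mk_union_le _ _).trans_lt (Cardinal.add_lt_of_lt hlam.aleph0_le ?_
    (hcodes _ fun _ h => h.1))
  exact (Cardinal.mk_union_le _ _).trans_lt
    (Cardinal.add_lt_of_lt hlam.aleph0_le htraces (hcodes _ hincomparable))

theorem hull_subset_HSet (hlam : lam.IsRegular) (hT : T.IsLambdaTree lam) {w : ZFSet.{0}}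
    (hw : w ∈ HSet (Order.succ lam)) : T.hull lam w ⊆ HSet (Order.succ lam) := by
  rintro _ ((hy | ⟨s, -, rfl⟩) | ⟨s, -, rfl⟩)
  · split_ifs at hy
    · obtain ⟨t, rfl⟩ := hy
      exact mem_HSet_of_subset hw fun _ h => (ZFSet.mem_inter.1 h).2
    · exact hy.elim
  all_goals exact mem_HSet_of_mem (codeSet_mem_HSet hlam hT) (T.code_mem_codeSet s)

theorem isClubIn_closurePoints_hull (hlam : lam.IsRegular) (hlam₀ : ℵ₀ < lam)
    (hT : T.IsLambdaTree lam) :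
    IsClubIn lam (HSet (Order.succ lam)) (closurePoints lam (HSet (Order.succ lam)) T.codeSet
      (T.hull lam)) :=
  isClubIn_closurePoints hlam hlam₀ (codeSet_mem_HSet hlam hT)
    (fun _ hw => hull_subset_HSet hlam hT hw) (mk_hull_lt hlam hT)

end Bounds

section Branch

variable {lam : Cardinal.{1}} {M : Set ZFSet.{0}} {e : ZFSet.{0}}

theorem isApproximated_predCodes (hM : ∀ w ∈ M, T.hull lam w ⊆ M) {κ : Cardinal.{1}}
    (hκ : κ < lam) (ht : t ∈ T.nodes) : IsApproximated κ M (T.predCodes t) := by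
  intro z hzM _ hz
  refine hM z hzM (Or.inl (Or.inl ?_))
  rw [if_pos (hz.trans_lt hκ)]
  exact ⟨⟨t, ht⟩, rfl⟩

theorem code_mem_iff_lt_of_inter_eq (hee : e.toSet ∩ M = (T.predCodes t).toSet ∩ M)
    {s : T.nodes.toSet} (hs : T.code s ∈ M) : T.code s ∈ e ↔ T.Lt s t := by
  rw [← T.code_mem_predCodes]
  exact ⟨fun h => (hee.subset ⟨h, hs⟩).1, fun h => (hee.symm.subset ⟨h, hs⟩).1⟩

theorem isChain_branchOf (hM : ∀ w ∈ M, T.hull lam w ⊆ M) (he : e ∈ M)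
    (hee : e.toSet ∩ M = (T.predCodes t).toSet ∩ M) :
    ∀ a ∈ T.branchOf e, ∀ b ∈ T.branchOf e, a ≠ b → T.Lt a b ∨ T.Lt b a := by
  rintro _ ⟨a, ha, rfl⟩ _ ⟨b, hb, rfl⟩ hab
  refine or_iff_not_and_not.2 fun ⟨hab₁, hab₂⟩ => ?_
  have hne : (T.incomparableLevels e).Nonempty :=
    ⟨_, a, b, ha, hb, fun h => hab (congrArg _ h), hab₁, hab₂, rfl⟩
  obtain ⟨a', b', ha', hb', hab', hl₁, hl₂, hmax⟩ := csInf_mem hne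
  have hM' (s : T.nodes.toSet) (hs : T.nodeHeight s ≤ sInf (T.incomparableLevels e)) :
      T.code s ∈ M :=
    hM e he (Or.inl (Or.inr ⟨s, hs, rfl⟩))
  have h₁ := (code_mem_iff_lt_of_inter_eq hee (hM' a' (hmax ▸ le_max_left _ _))).1 ha'
  have h₂ := (code_mem_iff_lt_of_inter_eq hee (hM' b' (hmax ▸ le_max_right _ _))).1 hb'
  rcases trichotomous_of_lt h₁ h₂ with h | h | h
  · exact hl₁ h
  · exact hab' (Subtype.ext h)
  · exact hl₂ h

theorem exists_code_mem_of_inter_eq (hM : ∀ w ∈ M, T.hull lam w ⊆ M) (he : e ∈ M)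
    (hee : e.toSet ∩ M = (T.predCodes t).toSet ∩ M) (ht : t ∈ T.nodes)
    (hth : T.nodeHeight t = T.heightSup M) (hα : α < T.height) :
    ∃ s : T.nodes.toSet, T.nodeHeight s = α ∧ T.code s ∈ e := by
  by_contra! hmiss
  obtain ⟨hα₀, hmiss₀⟩ : sInf (T.missingLevels e) ∈ T.missingLevels e :=
    csInf_mem ⟨α, hα, hmiss⟩
  have hM' (s : T.nodes.toSet) (hs : T.nodeHeight s ≤ sInf (T.missingLevels e)) :
      T.code s ∈ M :=
    hM e he (Or.inr ⟨s, hs, rfl⟩)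
  obtain ⟨s₀, hs₀, hs₀α⟩ := T.level_nonempty hα₀
  have hα₀t : sInf (T.missingLevels e) < T.nodeHeight t :=
    hth ▸ hs₀α ▸ T.nodeHeight_lt_heightSup (s := ⟨s₀, hs₀⟩) (hM' _ hs₀α.le)
  obtain ⟨s, hst, hsα⟩ := exists_lt_nodeHeight_eq ht hα₀t
  let s' : T.nodes.toSet := ⟨s, (mem_nodes_of_lt hst).1⟩
  exact hmiss₀ s' hsα ((code_mem_iff_lt_of_inter_eq hee (hM' s' hsα.le)).2 hst)

theorem isCofinalBranch_branchOf (hM : ∀ w ∈ M, T.hull lam w ⊆ M) (he : e ∈ M)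
    (hee : e.toSet ∩ M = (T.predCodes t).toSet ∩ M) (ht : t ∈ T.nodes)
    (hth : T.nodeHeight t = T.heightSup M) : T.IsCofinalBranch (T.branchOf e) := by
  refine ⟨image_subset_iff.2 fun s _ => s.2, isChain_branchOf hM he hee, fun α hα => ?_⟩
  obtain ⟨s, hsα, hse⟩ := exists_code_mem_of_inter_eq hM he hee ht hth hα
  exact ⟨s, ⟨s, hse, rfl⟩, hsα⟩

end Branch

end ZFTree

theorem GMP_implies_treeProperty_general (κ : Cardinal.{1}) (hreg : κ.IsRegular)
    (hgmp : GMP κ (Order.succ (Order.succ (Order.succ κ)))) :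
    ∀ T : ZFTree, ZFTree.IsLambdaTree (Order.succ (Order.succ κ)) T →
      ∃ B : Set ZFSet.{0}, T.IsCofinalBranch B := by
  intro T hT
  have hκ : κ < Order.succ (Order.succ κ) := (Order.lt_succ κ).trans (Order.lt_succ _)
  have hlam := Cardinal.isRegular_succ (hreg.aleph0_le.trans (Order.le_succ κ))
  obtain ⟨M, ⟨⟨hMsmall, hM⟩, -, hcodeSet, hclosed⟩⟩ :=
    hgmp.2 _ (T.isClubIn_closurePoints_hull hlam (hreg.aleph0_le.trans_lt hκ) hT)
  obtain ⟨t, ht, hth⟩ := T.level_nonempty (hT.1 ▸ T.heightSup_lt hlam hT hMsmall.2)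
  obtain ⟨e, he, hee⟩ := hM.guess _ hcodeSet _ (T.predCodes_subset t)
    (ZFTree.isApproximated_predCodes hclosed hκ ht)
  exact ⟨_, ZFTree.isCofinalBranch_branchOf hclosed he hee ht hth⟩

/-- Let `κ` be a regular cardinal with `κ^{<κ} = κ`.  If
`GMP_{κ⁺⁺}(κ⁺³)` holds, then the tree property `TP(κ⁺⁺)` holds: every
`κ⁺⁺`-tree has a cofinal branch. -/
theorem GMP_implies_treeProperty (κ : Cardinal.{1}) (hreg : κ.IsRegular)
    (hpow : κ ^< κ = κ)
    (hgmp : GMP κ (Order.succ (Order.succ (Order.succ κ)))) :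
    ∀ T : ZFTree, ZFTree.IsLambdaTree (Order.succ (Order.succ κ)) T →
      ∃ B : Set ZFSet.{0}, T.IsCofinalBranch B :=
  GMP_implies_treeProperty_general κ hreg hgmp
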